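/- Let Δ be a simplicial complex and let 𝒞 be an ordered proper vertex k-colouring of Δ. With the variable order x_1,…,x_k,y_1,…,y_k on R = K[x_1,…,x_k,y_1,…,y_k], the uniform face ideal I(Δ, 𝒞) is weakly polymatroidal if and only if 𝒞 is a nested colouring endowed with the nesting order. -/

import Mathlib

open MvPolynomial

/-- A simplicial complex on a vertex type `V`: a collection of finite subsets (faces)
containing the empty set and closed under taking subsets. -/
structure SimpComplex (V : Type) where
  faces : Set (Finset V)
  empty_mem : ∅ ∈ faces
  down_closed : ∀ {σ τ : Finset V}, σ ∈ faces → τ ⊆ σ → τ ∈ faces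

namespace SimpComplex

variable {V : Type}

/-- `A` is an independent set of `Δ`: no two distinct members lie in a common face. -/
def IsIndep (Δ : SimpComplex V) (A : Set V) : Prop :=
  ∀ u ∈ A, ∀ v ∈ A, u ≠ v → ∀ σ ∈ Δ.faces, ¬(u ∈ σ ∧ v ∈ σ)

/-- The link of a vertex `v` in `Δ`. -/
def link [DecidableEq V] (Δ : SimpComplex V) (v : V) : Set (Finset V) :=
  {τ | τ ∈ Δ.faces ∧ v ∉ τ ∧ insert v τ ∈ Δ.faces}

end SimpComplex

/-- A family of finsets indexed by `Fin k` is a partition of the vertex set. -/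
def IsPartition {V : Type} {k : ℕ} (C : Fin k → Finset V) : Prop :=
  ∀ v : V, ∃! i, v ∈ C i

/-- A proper vertex `k`-colouring of a simplicial complex: a partition into independent sets. -/
def IsProperColouring {V : Type} {k : ℕ} (Δ : SimpComplex V) (C : Fin k → Finset V) : Prop :=
  IsPartition C ∧ ∀ i, Δ.IsIndep (C i : Set V)

/-- An ordered proper vertex `k`-colouring, given by a duplicate-free list (recording the
linear order) for each colour class; the classes partition the vertices and are independent. -/
def IsOrderedColouring {V : Type} {k : ℕ} (Δ : SimpComplex V) (C : Fin k → List V) : Prop :=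
  (∀ i, (C i).Nodup) ∧ (∀ v : V, ∃! i, v ∈ C i) ∧ (∀ i, Δ.IsIndep {v | v ∈ C i})

/-- The given linear orders on the colour classes are nesting orders: within a class,
if `v` comes before `u` then `link(u) ⊆ link(v)`.  (Thus the colouring is nested and is
endowed with the nesting order.) -/
def IsNestingOrdered {V : Type} [DecidableEq V] {k : ℕ} (Δ : SimpComplex V)
    (C : Fin k → List V) : Prop :=
  ∀ i, (C i).Pairwise (fun v u => Δ.link u ⊆ Δ.link v)

/-- The index vector of a set `σ` with respect to the ordered colouring `C`:
`eVec C σ i = j` iff the (unique) element of `σ ∩ C i` is the `j`-th element of the list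
`C i` (counting from 1), and `0` if `σ ∩ C i = ∅`. -/
def eVec {V : Type} [DecidableEq V] {k : ℕ} (C : Fin k → List V) (σ : Finset V)
    (i : Fin k) : ℕ :=
  if (C i).any (fun v => decide (v ∈ σ)) then
    (C i).findIdx (fun v => decide (v ∈ σ)) + 1
  else 0

/-- The uniform monomial of a face `σ`:  `∏ i, x_i ^ (#C_i - e_i(σ)) * y_i ^ (e_i(σ))`,
where `x_i = X (Sum.inl i)` and `y_i = X (Sum.inr i)`. -/
noncomputable def uniformMonomial (K : Type) [Field K] {V : Type} [DecidableEq V] {k : ℕ}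
    (C : Fin k → List V) (σ : Finset V) : MvPolynomial (Fin k ⊕ Fin k) K :=
  ∏ i : Fin k, (X (Sum.inl i) ^ ((C i).length - eVec C σ i) * X (Sum.inr i) ^ eVec C σ i)

/-- The uniform face ideal of `Δ` with respect to the ordered colouring `C`. -/
noncomputable def uniformFaceIdeal (K : Type) [Field K] {V : Type} [DecidableEq V] {k : ℕ}
    (Δ : SimpComplex V) (C : Fin k → List V) : Ideal (MvPolynomial (Fin k ⊕ Fin k) K) :=
  Ideal.span {m | ∃ σ ∈ Δ.faces, m = uniformMonomial K C σ}

/-- The position of a variable in the order `x_1 < ⋯ < x_k < y_1 < ⋯ < y_k`. -/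
def varIdx {k : ℕ} : Fin k ⊕ Fin k → ℕ :=
  Sum.elim (fun i => (i : ℕ)) (fun i => k + (i : ℕ))

/-- A monomial ideal is stable if for every monomial `m ∈ I` with maximum variable `w = μ(m)`
and every variable `z < w`, the monomial `z·m/w` lies in `I`. -/
def IsStable {k : ℕ} {K : Type} [Field K] (I : Ideal (MvPolynomial (Fin k ⊕ Fin k) K)) :
    Prop :=
  ∀ a : (Fin k ⊕ Fin k) →₀ ℕ, MvPolynomial.monomial a (1 : K) ∈ I →
    ∀ w : Fin k ⊕ Fin k, a w ≠ 0 → (∀ w', a w' ≠ 0 → varIdx w' ≤ varIdx w) →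
    ∀ z : Fin k ⊕ Fin k, varIdx z < varIdx w →
      MvPolynomial.monomial (a - Finsupp.single w 1 + Finsupp.single z 1) (1 : K) ∈ I

/-- A monomial ideal is strongly stable if for every monomial `m ∈ I`, every variable `w`
dividing `m` and every variable `z < w`, the monomial `z·m/w` lies in `I`. -/
def IsStronglyStable {k : ℕ} {K : Type} [Field K]
    (I : Ideal (MvPolynomial (Fin k ⊕ Fin k) K)) : Prop :=
  ∀ a : (Fin k ⊕ Fin k) →₀ ℕ, MvPolynomial.monomial a (1 : K) ∈ I →
    ∀ w : Fin k ⊕ Fin k, a w ≠ 0 →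
    ∀ z : Fin k ⊕ Fin k, varIdx z < varIdx w →
      MvPolynomial.monomial (a - Finsupp.single w 1 + Finsupp.single z 1) (1 : K) ∈ I

/-- A monomial ideal of `K[x_1,…,x_k,y_1,…,y_k]` is `Q_k`-Borel, where `Q_k` is the poset on
the variables whose only relations are `x_i < y_i`:  for every monomial `m ∈ I` with
`y_i ∣ m`, the monomial `x_i·m/y_i` lies in `I`. -/
def IsQkBorel {k : ℕ} {K : Type} [Field K]
    (I : Ideal (MvPolynomial (Fin k ⊕ Fin k) K)) : Prop :=
  ∀ a : (Fin k ⊕ Fin k) →₀ ℕ, MvPolynomial.monomial a (1 : K) ∈ I →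
    ∀ i : Fin k, a (Sum.inr i) ≠ 0 →
      MvPolynomial.monomial
        (a - Finsupp.single (Sum.inr i) 1 + Finsupp.single (Sum.inl i) 1) (1 : K) ∈ I

/-- `a` is the exponent vector of a minimal (monomial) generator of the monomial ideal `I`:
the monomial `x^a` lies in `I` and no proper monomial divisor of it does. -/
def IsMinGen {σ : Type} {K : Type} [Field K] (I : Ideal (MvPolynomial σ K))
    (a : σ →₀ ℕ) : Prop :=
  MvPolynomial.monomial a (1 : K) ∈ I ∧
    ∀ b : σ →₀ ℕ, b ≤ a → b ≠ a → MvPolynomial.monomial b (1 : K) ∉ I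

/-- A monomial ideal is polymatroidal:  all minimal generators have the same degree, and for
every pair of minimal generators `m = ∏ z^{a}`, `m' = ∏ z^{b}` and every variable `t` with
`a t > b t` there is a variable `s` with `b s > a s` such that `z_s·m/z_t` is again a minimal
generator. -/
def IsPolymatroidal {σ : Type} {K : Type} [Field K]
    (I : Ideal (MvPolynomial σ K)) : Prop :=
  (∃ d : ℕ, ∀ a, IsMinGen I a → (a.sum fun _ e => e) = d) ∧
  ∀ a b, IsMinGen I a → IsMinGen I b → ∀ t, b t < a t →
    ∃ s, a s < b s ∧ IsMinGen I (a - Finsupp.single t 1 + Finsupp.single s 1)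

/-- A monomial ideal is squarefree: all of its minimal generators are squarefree. -/
def IsSquarefreeMonomialIdeal {σ : Type} {K : Type} [Field K]
    (I : Ideal (MvPolynomial σ K)) : Prop :=
  ∀ a, IsMinGen I a → ∀ v, a v ≤ 1

/-- `a` is a `Q_k`-Borel generator of `I`: a minimal generator which is not obtained from any
other minimal generator by a `Q_k`-Borel move (replacing `y_i` by `x_i`). -/
def IsQkBorelGen {k : ℕ} {K : Type} [Field K]
    (I : Ideal (MvPolynomial (Fin k ⊕ Fin k) K)) (a : (Fin k ⊕ Fin k) →₀ ℕ) : Prop :=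
  IsMinGen I a ∧
    ¬ ∃ b : (Fin k ⊕ Fin k) →₀ ℕ, IsMinGen I b ∧ ∃ i : Fin k, b (Sum.inr i) ≠ 0 ∧
      a = b - Finsupp.single (Sum.inr i) 1 + Finsupp.single (Sum.inl i) 1

/-- `I` is a principal `Q_k`-Borel ideal: it is `Q_k`-Borel and has a unique `Q_k`-Borel
generator. -/
def IsPrincipalQkBorel {k : ℕ} {K : Type} [Field K]
    (I : Ideal (MvPolynomial (Fin k ⊕ Fin k) K)) : Prop :=
  IsQkBorel I ∧ ∃! a, IsQkBorelGen I a

/-- A monomial ideal of `K[x_1,…,x_k,y_1,…,y_k]` is weakly polymatroidal with respect to the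
variable order `x_1,…,x_k,y_1,…,y_k`: for every pair of minimal generators `m = ∏ z^a` and
`m' = ∏ z^b` which agree on all variables before `t` and satisfy `a t > b t`, there is a later
variable `s > t` dividing `m'` such that `z_t·m'/z_s ∈ I`. -/
def IsWeaklyPolymatroidal {k : ℕ} {K : Type} [Field K]
    (I : Ideal (MvPolynomial (Fin k ⊕ Fin k) K)) : Prop :=
  ∀ a b, IsMinGen I a → IsMinGen I b →
    ∀ t : Fin k ⊕ Fin k, (∀ t', varIdx t' < varIdx t → a t' = b t') → b t < a t →
      ∃ s : Fin k ⊕ Fin k, varIdx t < varIdx s ∧ b s ≠ 0 ∧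
        MvPolynomial.monomial (b - Finsupp.single s 1 + Finsupp.single t 1) (1 : K) ∈ I

/-! The uniform monomial of a face `σ` has exponent `#C_i - e_i(σ)` at `x_i` and `e_i(σ)` at
`y_i`. All generators thus have degree `∑ #C_i`, the minimal generators are exactly these
exponent vectors, and an exchange `z_t·m/z_s` of a generator lies in the ideal only if it is
itself a generator. For generators first differing at `x_i` the only possible exchange is
`y_i ↦ x_i`, i.e. lowering `e_i` by one while keeping the other indices. If the colouring is
nested, replacing the vertex of `C_i` in a face by its predecessor gives a face, which provides
this exchange. Conversely, for a face `τ` avoiding `C_i`, the exchange applied to `τ` and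
`τ ∪ {v}` shows that `τ ∪ {v'}` is a face for the predecessor `v'` of `v`; iterating,
`link(u) ⊆ link(v)` whenever `v` precedes `u`. -/

lemma Finsupp.eq_of_le_of_degree_le {ι : Type*} {f g : ι →₀ ℕ} (h : f ≤ g)
    (hd : g.degree ≤ f.degree) : f = g := by
  obtain ⟨d, rfl⟩ := le_iff_exists_add.mp h
  have : d.degree = 0 := by simp only [map_add] at hd; omega
  simp [(Finsupp.degree_eq_zero_iff d).mp this]

lemma Finsupp.degree_tsub_single_add_single {ι : Type*} {f : ι →₀ ℕ} {s : ι} (hs : f s ≠ 0)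
    (t : ι) : (f - Finsupp.single s 1 + Finsupp.single t 1).degree = f.degree := by
  have h := congrArg Finsupp.degree (tsub_add_cancel_of_le
    (Finsupp.single_le_iff.mpr (Nat.one_le_iff_ne_zero.mpr hs)))
  rwa [map_add, Finsupp.degree_single] at h ⊢

section MonomialIdeal

variable {σ : Type}

lemma monomial_mem_span_monomial_iff {R : Type} [CommSemiring R] [Nontrivial R]
    {S : Set (σ →₀ ℕ)} {b : σ →₀ ℕ} :
    monomial b (1 : R) ∈ Ideal.span ((fun a => monomial a (1 : R)) '' S) ↔ ∃ a ∈ S, a ≤ b := by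
  classical
  simp [mem_ideal_span_monomial_image, support_monomial]

lemma isMinGen_span_monomial_iff {K : Type} [Field K] {S : Set (σ →₀ ℕ)} {d : ℕ}
    (hS : ∀ a ∈ S, a.degree = d) {b : σ →₀ ℕ} :
    IsMinGen (Ideal.span ((fun a => monomial a (1 : K)) '' S)) b ↔ b ∈ S := by
  simp only [IsMinGen, monomial_mem_span_monomial_iff]
  constructor
  · rintro ⟨⟨a, ha, hab⟩, hmin⟩
    by_contra hb
    exact hmin a hab (by rintro rfl; exact hb ha) ⟨a, ha, le_rfl⟩
  · intro hb
    refine ⟨⟨b, hb, le_rfl⟩, fun c hcb hne ⟨a, ha, hac⟩ => hne ?_⟩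
    have hab : a = b := Finsupp.eq_of_le_of_degree_le (hac.trans hcb) (by rw [hS a ha, hS b hb])
    exact le_antisymm hcb (hab ▸ hac)

end MonomialIdeal

namespace IsOrderedColouring

variable {V : Type} {k : ℕ} {Δ : SimpComplex V} {C : Fin k → List V} {σ : Finset V} {i : Fin k}

lemma eq_of_mem_face (hC : IsOrderedColouring Δ C) (hσ : σ ∈ Δ.faces) {u v : V}
    (hu : u ∈ C i) (hv : v ∈ C i) (huσ : u ∈ σ) (hvσ : v ∈ σ) : u = v :=
  by_contra fun hne => hC.2.2 i u hu v hv hne σ hσ ⟨huσ, hvσ⟩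

lemma colour_eq (hC : IsOrderedColouring Δ C) {j : Fin k} {v : V} (hi : v ∈ C i)
    (hj : v ∈ C j) : i = j :=
  (hC.2.1 v).unique hi hj

end IsOrderedColouring

section IndexVector

variable {V : Type} [DecidableEq V] {k : ℕ} (C : Fin k → List V) (σ τ : Finset V) (i : Fin k)

lemma eVec_le : eVec C σ i ≤ (C i).length := by
  unfold eVec
  split_ifs with h
  · exact List.findIdx_lt_length_of_exists (by simpa using h)
  · exact Nat.zero_le _

lemma eVec_eq_zero_iff : eVec C σ i = 0 ↔ ∀ v ∈ C i, v ∉ σ := by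
  unfold eVec
  split <;> simp_all

variable {C σ τ i}

lemma getElem_mem_of_eVec_eq_succ {m : ℕ} (h : eVec C σ i = m + 1) :
    ∃ hm : m < (C i).length, (C i)[m] ∈ σ := by
  unfold eVec at h
  split_ifs at h with hany
  · obtain rfl : (C i).findIdx (fun v => decide (v ∈ σ)) = m := by omega
    have hlt := List.findIdx_lt_length_of_exists (List.any_eq_true.mp hany)
    exact ⟨hlt, by simpa using List.findIdx_getElem (w := hlt)⟩

lemma eVec_congr (h : ∀ v ∈ C i, v ∈ σ ↔ v ∈ τ) : eVec C σ i = eVec C τ i := by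
  have hmap : (C i).map (fun v => decide (v ∈ σ)) = (C i).map (fun v => decide (v ∈ τ)) :=
    List.map_congr_left (by simpa using h)
  have hany := congrArg (List.any · id) hmap
  have hidx := congrArg (List.findIdx id) hmap
  simp only [List.any_map, List.findIdx_map, Function.id_comp] at hany hidx
  rw [eVec, eVec, hany, hidx]

variable {Δ : SimpComplex V}

namespace IsOrderedColouring

lemma eVec_eq_succ_of_getElem_mem (hC : IsOrderedColouring Δ C) (hσ : σ ∈ Δ.faces) {m : ℕ}
    (hm : m < (C i).length) (h : (C i)[m] ∈ σ) : eVec C σ i = m + 1 := by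
  obtain ⟨m', hm'⟩ := Nat.exists_eq_succ_of_ne_zero
    (mt (eVec_eq_zero_iff C σ i).mp fun h' => h' _ (List.getElem_mem hm) h)
  obtain ⟨hlt, hmem⟩ := getElem_mem_of_eVec_eq_succ hm'
  rw [hm', (hC.1 i).getElem_inj_iff.mp (hC.eq_of_mem_face hσ (List.getElem_mem hlt)
    (List.getElem_mem hm) hmem h)]

lemma mem_of_eVec_eq (hC : IsOrderedColouring Δ C) (hσ : σ ∈ Δ.faces) {v : V} (hv : v ∈ C i)
    (hvσ : v ∈ σ) (h : eVec C τ i = eVec C σ i) : v ∈ τ := by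
  obtain ⟨m, hm, rfl⟩ := List.mem_iff_getElem.mp hv
  rw [hC.eVec_eq_succ_of_getElem_mem hσ hm hvσ] at h
  exact (getElem_mem_of_eVec_eq_succ h).2

lemma eVec_insert_of_ne (hC : IsOrderedColouring Δ C) {u : V} (hu : u ∈ C i) {j : Fin k}
    (hji : j ≠ i) : eVec C (insert u σ) j = eVec C σ j :=
  eVec_congr fun v hv => by
    rw [Finset.mem_insert, or_iff_right (by rintro rfl; exact hji (hC.colour_eq hv hu))]

lemma eVec_erase_of_ne (hC : IsOrderedColouring Δ C) {u : V} (hu : u ∈ C i) {j : Fin k}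
    (hji : j ≠ i) : eVec C (σ.erase u) j = eVec C σ j :=
  eVec_congr fun v hv => by
    rw [Finset.mem_erase, and_iff_right (by rintro rfl; exact hji (hC.colour_eq hv hu))]

end IsOrderedColouring

end IndexVector

section UniformExponent

variable {V : Type} [DecidableEq V] {k : ℕ} (C : Fin k → List V) (σ : Finset V)

noncomputable def uniformExponent : Fin k ⊕ Fin k →₀ ℕ :=
  Finsupp.equivFunOnFinite.symm (Sum.elim (fun i => (C i).length - eVec C σ i) (eVec C σ))

@[simp] lemma uniformExponent_inl (i : Fin k) :
    uniformExponent C σ (Sum.inl i) = (C i).length - eVec C σ i := rfl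

@[simp] lemma uniformExponent_inr (i : Fin k) :
    uniformExponent C σ (Sum.inr i) = eVec C σ i := rfl

lemma uniformExponent_inl_add_inr (i : Fin k) :
    uniformExponent C σ (Sum.inl i) + uniformExponent C σ (Sum.inr i) = (C i).length := by
  simp only [uniformExponent_inl, uniformExponent_inr]
  exact Nat.sub_add_cancel (eVec_le C σ i)

lemma degree_uniformExponent : (uniformExponent C σ).degree = ∑ i, (C i).length := by
  rw [Finsupp.degree_eq_sum, Fintype.sum_sum_type, ← Finset.sum_add_distrib]
  exact Finset.sum_congr rfl fun i _ => uniformExponent_inl_add_inr C σ i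

lemma uniformMonomial_eq_monomial (K : Type) [Field K] :
    uniformMonomial K C σ = monomial (uniformExponent C σ) 1 := by
  rw [monomial_eq, C_1, one_mul, Finsupp.prod_fintype _ _ fun _ => pow_zero _,
    Fintype.prod_sum_type, uniformMonomial, Finset.prod_mul_distrib]
  rfl

lemma uniformFaceIdeal_eq_span (K : Type) [Field K] (Δ : SimpComplex V) :
    uniformFaceIdeal K Δ C =
      Ideal.span ((fun a => monomial a (1 : K)) '' (uniformExponent C '' Δ.faces)) := by
  rw [uniformFaceIdeal, Set.image_image]
  congr 1
  ext m
  simp [uniformMonomial_eq_monomial, eq_comm]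

variable {C} {K : Type} [Field K] {Δ : SimpComplex V} {a : Fin k ⊕ Fin k →₀ ℕ}

lemma monomial_mem_uniformFaceIdeal_iff :
    monomial a (1 : K) ∈ uniformFaceIdeal K Δ C ↔ ∃ σ ∈ Δ.faces, uniformExponent C σ ≤ a := by
  rw [uniformFaceIdeal_eq_span, monomial_mem_span_monomial_iff, Set.exists_mem_image]

lemma isMinGen_uniformFaceIdeal_iff :
    IsMinGen (uniformFaceIdeal K Δ C) a ↔ ∃ σ ∈ Δ.faces, uniformExponent C σ = a := by
  rw [uniformFaceIdeal_eq_span,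
    isMinGen_span_monomial_iff (d := ∑ i, (C i).length) (by
      rintro _ ⟨σ, -, rfl⟩
      exact degree_uniformExponent C σ)]
  rfl

end UniformExponent

section Moves

variable {V : Type} [DecidableEq V] {k : ℕ} {C : Fin k → List V} {σ ρ : Finset V} {i : Fin k}

lemma uniformExponent_eq_move_iff {s : Fin k ⊕ Fin k} (hsi : s ≠ Sum.inl i)
    (hσs : uniformExponent C σ s ≠ 0) :
    uniformExponent C ρ =
        uniformExponent C σ - Finsupp.single s 1 + Finsupp.single (Sum.inl i) 1 ↔
      s = Sum.inr i ∧ eVec C ρ i + 1 = eVec C σ i ∧ ∀ j ≠ i, eVec C ρ j = eVec C σ j := by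
  have hρi := eVec_le C ρ i
  have hσi := eVec_le C σ i
  constructor
  · intro h
    have hs : s = Sum.inr i := by
      by_contra hs
      have hl := congr($h (Sum.inl i))
      have hr := congr($h (Sum.inr i))
      simp only [uniformExponent_inl, uniformExponent_inr, Finsupp.coe_add, Finsupp.coe_tsub,
        Pi.add_apply, Pi.sub_apply, Finsupp.single_eq_same, Finsupp.single_eq_of_ne', hsi, hs,
        Ne, reduceCtorEq, not_false_eq_true, tsub_zero, add_zero] at hl hr
      omega
    subst hs
    refine ⟨rfl, ?_, fun j hj => ?_⟩
    · have hr := congr($h (Sum.inr i))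
      simp only [uniformExponent_inr, Finsupp.coe_add, Finsupp.coe_tsub, Pi.add_apply,
        Pi.sub_apply, Finsupp.single_eq_same, Finsupp.single_eq_of_ne, Ne, reduceCtorEq,
        not_false_eq_true, add_zero] at hr hσs
      omega
    · have hr := congr($h (Sum.inr j))
      simpa [Finsupp.single_apply, Ne.symm hj] using hr
  · rintro ⟨rfl, hi, hj⟩
    ext (j | j) <;> by_cases hji : j = i <;> simp_all <;> omega

end Moves

lemma varIdx_inl_lt_varIdx_inr {k : ℕ} (i j : Fin k) :
    varIdx (Sum.inl i) < varIdx (Sum.inr j) := by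
  simp only [varIdx, Sum.elim_inl, Sum.elim_inr]
  omega

section Nesting

variable {V : Type} [DecidableEq V] {k : ℕ} {Δ : SimpComplex V} {C : Fin k → List V}
  {τ : Finset V} {i : Fin k}

lemma exists_face_eVec_pred (hC : IsOrderedColouring Δ C) (hnest : IsNestingOrdered Δ C)
    (hτ : τ ∈ Δ.faces) (hτi : eVec C τ i ≠ 0) :
    ∃ ρ ∈ Δ.faces, eVec C ρ i + 1 = eVec C τ i ∧ ∀ j ≠ i, eVec C ρ j = eVec C τ j := by
  obtain ⟨m, hm⟩ := Nat.exists_eq_succ_of_ne_zero hτi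
  obtain ⟨hmlt, hu⟩ := getElem_mem_of_eVec_eq_succ hm
  have huC : (C i)[m] ∈ C i := List.getElem_mem hmlt
  have herase : τ.erase (C i)[m] ∈ Δ.link (C i)[m] :=
    ⟨Δ.down_closed hτ (Finset.erase_subset _ _), Finset.notMem_erase _ _,
      (Finset.insert_erase hu).symm ▸ hτ⟩
  have hj (j) (hji : j ≠ i) : eVec C (τ.erase (C i)[m]) j = eVec C τ j :=
    hC.eVec_erase_of_ne huC hji
  cases m with
  | zero =>
    refine ⟨_, herase.1, ?_, hj⟩
    rw [hm, (eVec_eq_zero_iff C _ i).mpr fun v hv hvmem => Finset.ne_of_mem_erase hvmem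
      (hC.eq_of_mem_face hτ hv huC (Finset.mem_of_mem_erase hvmem) hu)]
  | succ m =>
    have hmlt' : m < (C i).length := by omega
    have hlink : Δ.link (C i)[m + 1] ⊆ Δ.link (C i)[m] :=
      List.pairwise_iff_getElem.mp (hnest i) m (m + 1) hmlt' hmlt (Nat.lt_succ_self m)
    have hρ := (hlink herase).2.2
    refine ⟨_, hρ, ?_, fun j hji => ?_⟩
    · rw [hm, hC.eVec_eq_succ_of_getElem_mem hρ hmlt' (Finset.mem_insert_self _ _)]
    · rw [hC.eVec_insert_of_ne (List.getElem_mem hmlt') hji, hj j hji]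

lemma isWeaklyPolymatroidal_of_isNestingOrdered (K : Type) [Field K]
    (hC : IsOrderedColouring Δ C) (hnest : IsNestingOrdered Δ C) :
    IsWeaklyPolymatroidal (uniformFaceIdeal K Δ C) := by
  intro a b ha hb t hbefore hlt
  obtain ⟨σ, -, rfl⟩ := isMinGen_uniformFaceIdeal_iff.mp ha
  obtain ⟨τ, hτ, rfl⟩ := isMinGen_uniformFaceIdeal_iff.mp hb
  rcases t with i | i
  · have hτi : eVec C τ i ≠ 0 := by
      simp only [uniformExponent_inl] at hlt
      omega
    obtain ⟨ρ, hρ, hmove⟩ := exists_face_eVec_pred hC hnest hτ hτi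
    refine ⟨Sum.inr i, varIdx_inl_lt_varIdx_inr i i, hτi, ?_⟩
    rw [← (uniformExponent_eq_move_iff (ρ := ρ) Sum.inr_ne_inl hτi).mpr ⟨rfl, hmove⟩]
    exact monomial_mem_uniformFaceIdeal_iff.mpr ⟨ρ, hρ, le_rfl⟩
  · have hx := hbefore (Sum.inl i) (varIdx_inl_lt_varIdx_inr i i)
    have := uniformExponent_inl_add_inr C σ i
    have := uniformExponent_inl_add_inr C τ i
    omega

end Nesting

section WeaklyPolymatroidal

variable {V : Type} [DecidableEq V] {k : ℕ} {K : Type} [Field K] {Δ : SimpComplex V}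
  {C : Fin k → List V} {τ : Finset V} {i : Fin k}

lemma insert_getElem_mem_faces_of_succ (hC : IsOrderedColouring Δ C)
    (hWP : IsWeaklyPolymatroidal (uniformFaceIdeal K Δ C)) (hτ : τ ∈ Δ.faces)
    (hτi : ∀ v ∈ C i, v ∉ τ) {q : ℕ} (hq : q + 1 < (C i).length)
    (hface : insert (C i)[q + 1] τ ∈ Δ.faces) : insert (C i)[q] τ ∈ Δ.faces := by
  set σ := insert (C i)[q + 1] τ
  have hσi : eVec C σ i = q + 2 :=
    hC.eVec_eq_succ_of_getElem_mem hface hq (Finset.mem_insert_self _ _)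
  have hσj (j) (hji : j ≠ i) : eVec C σ j = eVec C τ j :=
    hC.eVec_insert_of_ne (List.getElem_mem hq) hji
  have hτi0 : eVec C τ i = 0 := (eVec_eq_zero_iff C τ i).mpr hτi
  obtain ⟨s, his, hσs, hmem⟩ := hWP (uniformExponent C τ) (uniformExponent C σ)
    (isMinGen_uniformFaceIdeal_iff.mpr ⟨τ, hτ, rfl⟩)
    (isMinGen_uniformFaceIdeal_iff.mpr ⟨σ, hface, rfl⟩) (Sum.inl i)
    (by
      rintro (j | j) hj
      · have hji : j ≠ i := by rintro rfl; exact lt_irrefl _ hj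
        simp [hσj j hji]
      · exact absurd hj (varIdx_inl_lt_varIdx_inr i j).not_gt)
    (by simp only [uniformExponent_inl, hσi, hτi0]; omega)
  obtain ⟨ρ, hρ, hle⟩ := monomial_mem_uniformFaceIdeal_iff.mp hmem
  have hρeq : uniformExponent C ρ =
      uniformExponent C σ - Finsupp.single s 1 + Finsupp.single (Sum.inl i) 1 := by
    refine Finsupp.eq_of_le_of_degree_le hle ?_
    rw [Finsupp.degree_tsub_single_add_single hσs, degree_uniformExponent,
      degree_uniformExponent]
  have hsi : s ≠ Sum.inl i := by rintro rfl; exact lt_irrefl _ his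
  obtain ⟨-, hρi, hρj⟩ := (uniformExponent_eq_move_iff hsi hσs).mp hρeq
  have hqρ : (C i)[q] ∈ ρ := (getElem_mem_of_eVec_eq_succ (by omega)).2
  refine Δ.down_closed hρ (Finset.insert_subset hqρ fun v hvτ => ?_)
  obtain ⟨j, hvj, -⟩ := hC.2.1 v
  have hji : j ≠ i := by rintro rfl; exact hτi v hvj hvτ
  exact hC.mem_of_eVec_eq hτ hvj hvτ ((hρj j hji).trans (hσj j hji))

lemma insert_getElem_mem_faces_of_le (hC : IsOrderedColouring Δ C)
    (hWP : IsWeaklyPolymatroidal (uniformFaceIdeal K Δ C)) (hτ : τ ∈ Δ.faces)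
    (hτi : ∀ v ∈ C i, v ∉ τ) {p r : ℕ} (hpr : p ≤ r) (hr : r < (C i).length)
    (hface : insert (C i)[r] τ ∈ Δ.faces) : insert (C i)[p] τ ∈ Δ.faces := by
  induction r, hpr using Nat.le_induction with
  | base => exact hface
  | succ r hpr ih =>
    exact ih (by omega) (insert_getElem_mem_faces_of_succ hC hWP hτ hτi hr hface)

lemma isNestingOrdered_of_isWeaklyPolymatroidal (hC : IsOrderedColouring Δ C)
    (hWP : IsWeaklyPolymatroidal (uniformFaceIdeal K Δ C)) : IsNestingOrdered Δ C := by
  intro i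
  refine List.pairwise_iff_getElem.mpr fun p q hp hq hpq τ ⟨hτ, hqτ, hface⟩ => ?_
  have hτi : ∀ v ∈ C i, v ∉ τ := fun v hv hvτ => hqτ <|
    hC.eq_of_mem_face hface hv (List.getElem_mem hq) (Finset.mem_insert_of_mem hvτ)
      (Finset.mem_insert_self _ _) ▸ hvτ
  exact ⟨hτ, hτi _ (List.getElem_mem hp),
    insert_getElem_mem_faces_of_le hC hWP hτ hτi hpq.le hq hface⟩

end WeaklyPolymatroidal

/-- Theorem 5.6: the uniform face ideal `I(Δ,𝒞)` is weakly polymatroidal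
iff `𝒞` is a nested colouring endowed with the nesting order. -/
theorem stmt10 {n k : ℕ} (K : Type) [Field K] (Δ : SimpComplex (Fin n))
    (C : Fin k → List (Fin n)) (hC : IsOrderedColouring Δ C) :
    IsWeaklyPolymatroidal (uniformFaceIdeal K Δ C) ↔ IsNestingOrdered Δ C :=
  ⟨isNestingOrdered_of_isWeaklyPolymatroidal hC, isWeaklyPolymatroidal_of_isNestingOrdered K hC⟩
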